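/- Let s ≥ 5 be an integer and let λ be an s-minimal biliaison type with q_s(λ) ≤ (s+1)². Then one of the following occurs: (1) λ = ∅ and q_s(λ) = 0; (2) λ = (1) or λ = (s−1), and q_s(λ) = (s−1)²; (3) 5 ≤ s ≤ 7 and λ = (2) or λ = (s−2), with q_s(λ) = 2(s−1)(s−2); (4) s = 6 and λ = (3), with q_s(λ) = 45; (5) s = 5 or s = 6 and λ = (1, s−1); (6) s = 5 and λ = (1, 3) or λ = (2, 4), with q_s(λ) = 36; (7) s = 5 and λ = (1, 2) or λ = (3, 4), with q_s(λ) = 34. -/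

import Mathlib

/-- An `s`-minimal biliaison type: a strictly increasing finite sequence of
positive integers, all strictly less than `s` (the empty sequence is allowed). -/
def SMinimal (s : ℕ) (l : List ℕ) : Prop :=
  l.Chain' (· < ·) ∧ ∀ k ∈ l, 0 < k ∧ k < s

/-- The quadratic form `q_s(λ) = Σ_i k_i(s−1)(s−k_i) − 2 Σ_{i<j} k_i(s−k_j)`. -/
def qform (s : ℕ) (l : List ℕ) : ℤ :=
  (∑ i : Fin l.length, (l.get i : ℤ) * ((s : ℤ) - 1) * ((s : ℤ) - l.get i))
  - 2 * ∑ i : Fin l.length, ∑ j : Fin l.length,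
      if (i : ℕ) < (j : ℕ) then (l.get i : ℤ) * ((s : ℤ) - l.get j) else 0

/-- The `s`-dual `λ′ = (s−k_u, …, s−k_1)` of a biliaison type. -/
def sdual (s : ℕ) (l : List ℕ) : List ℕ := (l.map (fun k => s - k)).reverse

/-! With `f k = k (s - k)` one has `q_s(λ) = (s - u) Σ_i f(k_i) + Σ_{i<j} f(k_j - k_i)`, and
`f ≥ s - 1` on `[1, s - 1]`; hence `2 q_s(λ) ≥ (s - 1) u (2s - u - 1)`. Against `q_s(λ) ≤ (s + 1)²`
this leaves `u ≤ 1`, where `q_s((a)) = a (s - 1) (s - a)` is classified directly, or `s ≤ 6` and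
`u ≤ 3`, finitely many types that are checked one by one. -/

lemma qform_nil (s : ℕ) : qform s [] = 0 := by simp [qform]

lemma qform_cons (s k : ℕ) (t : List ℕ) :
    qform s (k :: t) = k * ((s : ℤ) - 1) * (s - k)
      - 2 * k * (t.map fun x : ℕ => (s : ℤ) - x).sum + qform s t := by
  have hsum : ∑ i : Fin t.length, ((s : ℤ) - t[(i : ℕ)]) = (t.map fun x : ℕ => (s : ℤ) - x).sum := by
    rw [← List.sum_ofFn, ← List.ofFn_getElem_eq_map]
  simp only [qform, List.length_cons, Fin.sum_univ_succ, List.get_eq_getElem, Fin.val_zero,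
    Fin.val_succ, List.getElem_cons_zero, List.getElem_cons_succ, if_false, Nat.zero_lt_succ,
    if_true, Nat.not_lt_zero, Nat.add_one_lt_add_one_iff, zero_add]
  rw [← Finset.mul_sum, hsum]
  ring

lemma qform_singleton (s a : ℕ) : qform s [a] = a * ((s : ℤ) - 1) * (s - a) := by
  simp [qform_cons, qform_nil]

lemma sub_one_le_mul_sub {s d : ℤ} (h1 : 1 ≤ d) (h2 : d ≤ s - 1) : s - 1 ≤ d * (s - d) := by
  nlinarith

lemma sum_map_gap_mul (s k : ℤ) (t : List ℕ) :
    (t.map fun x : ℕ => ((x : ℤ) - k) * (s - (x - k))).sum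
      = t.length * (k * (s - k)) + (t.map fun x : ℕ => (x : ℤ) * (s - x)).sum
        - 2 * k * (t.map fun x : ℕ => s - (x : ℤ)).sum := by
  induction t with
  | nil => simp
  | cons x t ih => simp only [List.map_cons, List.sum_cons, List.length_cons, ih]; push_cast; ring

lemma length_le_of_pairwise_lt {s : ℕ} {l : List ℕ} (hl : l.Pairwise (· < ·))
    (hmem : ∀ k ∈ l, 0 < k ∧ k < s) : l.length ≤ s - 1 := by
  have hsub : l.toFinset ⊆ Finset.Ioo 0 s := fun x hx =>
    Finset.mem_Ioo.mpr (hmem x (List.mem_toFinset.mp hx))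
  calc l.length = l.toFinset.card := (List.toFinset_card_of_nodup hl.nodup).symm
    _ ≤ (Finset.Ioo 0 s).card := Finset.card_le_card hsub
    _ = s - 1 := by simp

theorem two_mul_qform_ge {s : ℕ} {l : List ℕ} (hl : l.Pairwise (· < ·))
    (hmem : ∀ k ∈ l, 0 < k ∧ k < s) :
    2 * ((s : ℤ) - l.length) * (l.map fun k : ℕ => (k : ℤ) * (s - k)).sum
      + ((s : ℤ) - 1) * l.length * (l.length - 1) ≤ 2 * qform s l := by
  induction l with
  | nil => simp [qform_nil]
  | cons k t ih =>
    obtain ⟨hkt, ht⟩ := List.pairwise_cons.mp hl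
    have hk := hmem k List.mem_cons_self
    have hqt := ih ht fun x hx => hmem x (List.mem_cons_of_mem k hx)
    have hgaps := List.card_nsmul_le_sum (t.map fun x : ℕ => ((x : ℤ) - k) * (s - (x - k)))
      ((s : ℤ) - 1) <| by
        simp only [List.mem_map]
        rintro _ ⟨x, hx, rfl⟩
        have := hkt x hx
        have := hmem x (List.mem_cons_of_mem k hx)
        exact sub_one_le_mul_sub (by omega) (by omega)
    rw [List.length_map, sum_map_gap_mul, nsmul_eq_mul] at hgaps
    rw [qform_cons]
    simp only [List.map_cons, List.sum_cons, List.length_cons]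
    push_cast
    linarith

theorem length_mul_le_two_mul_qform {s : ℕ} {l : List ℕ} (hl : l.Pairwise (· < ·))
    (hmem : ∀ k ∈ l, 0 < k ∧ k < s) :
    ((s : ℤ) - 1) * l.length * (2 * s - l.length - 1) ≤ 2 * qform s l := by
  have hlen := length_le_of_pairwise_lt hl hmem
  have hsum := List.card_nsmul_le_sum (l.map fun k : ℕ => (k : ℤ) * (s - k)) ((s : ℤ) - 1) <| by
    simp only [List.mem_map]
    rintro _ ⟨k, hk, rfl⟩
    have := hmem k hk
    exact sub_one_le_mul_sub (by omega) (by omega)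
  rw [List.length_map, nsmul_eq_mul] at hsum
  have hweight := mul_le_mul_of_nonneg_left hsum (by omega : (0 : ℤ) ≤ 2 * ((s : ℤ) - l.length))
  linarith [two_mul_qform_ge hl hmem]

lemma singleton_cases {s a : ℕ} (hs : 5 ≤ s) (ha : 0 < a ∧ a < s)
    (hq : (a : ℤ) * (s - 1) * (s - a) ≤ (s + 1) ^ 2) :
    a = 1 ∨ a = s - 1 ∨ (s ≤ 7 ∧ (a = 2 ∨ a = s - 2)) ∨ (s = 6 ∧ a = 3) := by
  have hs' : (5 : ℤ) ≤ s := by exact_mod_cast hs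
  rcases (by omega : a = 1 ∨ a = s - 1 ∨ (2 ≤ a ∧ a + 2 ≤ s)) with h | h | ⟨h2, h2'⟩
  · exact Or.inl h
  · exact Or.inr (Or.inl h)
  have hs7 : s ≤ 7 := by
    nlinarith [mul_nonneg (by omega : (0 : ℤ) ≤ a - 2) (by omega : (0 : ℤ) ≤ s - 2 - a)]
  rcases (by omega : a = 2 ∨ a = s - 2 ∨ (3 ≤ a ∧ a + 3 ≤ s)) with h | h | ⟨h3, h3'⟩
  · exact Or.inr (Or.inr (Or.inl ⟨hs7, Or.inl h⟩))
  · exact Or.inr (Or.inr (Or.inl ⟨hs7, Or.inr h⟩))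
  have hs6 : s ≤ 6 := by
    nlinarith [mul_nonneg (by omega : (0 : ℤ) ≤ a - 3) (by omega : (0 : ℤ) ≤ s - 3 - a)]
  omega

lemma two_le_length_cases {s u : ℕ} (hs : 5 ≤ s) (hu : 2 ≤ u) (hus : u ≤ s - 1)
    (hq : ((s : ℤ) - 1) * u * (2 * s - u - 1) ≤ 2 * (s + 1) ^ 2) :
    (s = 5 ∧ u ≤ 3) ∨ (s = 6 ∧ u = 2) := by
  have hs6 : s ≤ 6 := by
    have hs' : (5 : ℤ) ≤ s := by exact_mod_cast hs
    nlinarith [mul_nonneg (by omega : (0 : ℤ) ≤ u - 2) (by omega : (0 : ℤ) ≤ 2 * s - 3 - u)]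
  interval_cases s <;> interval_cases u <;> revert hq <;> norm_num

lemma singleton_classification {s a : ℕ} (hs : 5 ≤ s) (ha : 0 < a ∧ a < s)
    (hq : qform s [a] ≤ ((s : ℤ) + 1) ^ 2) :
    ((a = 1 ∨ a = s - 1) ∧ qform s [a] = ((s : ℤ) - 1) ^ 2) ∨
    (s ≤ 7 ∧ (a = 2 ∨ a = s - 2) ∧ qform s [a] = 2 * ((s : ℤ) - 1) * ((s : ℤ) - 2)) ∨
    (s = 6 ∧ a = 3 ∧ qform s [a] = 45) := by
  rw [qform_singleton] at hq ⊢
  have hs1 : ((s - 1 : ℕ) : ℤ) = s - 1 := by omega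
  have hs2 : ((s - 2 : ℕ) : ℤ) = s - 2 := by omega
  rcases singleton_cases hs ha hq with rfl | rfl | ⟨hs7, rfl | rfl⟩ | ⟨rfl, rfl⟩
  · exact Or.inl ⟨Or.inl rfl, by push_cast; ring⟩
  · exact Or.inl ⟨Or.inr rfl, by rw [hs1]; ring⟩
  · exact Or.inr (Or.inl ⟨hs7, Or.inl rfl, by push_cast; ring⟩)
  · exact Or.inr (Or.inl ⟨hs7, Or.inr rfl, by rw [hs2]; ring⟩)
  · norm_num

lemma classification_of_two_le_length {s : ℕ} (hs : 5 ≤ s) {l : List ℕ} (hl : SMinimal s l)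
    (hu : 2 ≤ l.length) (hq : qform s l ≤ ((s : ℤ) + 1) ^ 2) :
    ((s = 5 ∨ s = 6) ∧ l = [1, s - 1]) ∨
    (s = 5 ∧ (l = [1, 3] ∨ l = [2, 4]) ∧ qform s l = 36) ∨
    (s = 5 ∧ (l = [1, 2] ∨ l = [3, 4]) ∧ qform s l = 34) := by
  obtain ⟨hchain, hmem⟩ := hl
  have hsorted : l.Pairwise (· < ·) := List.isChain_iff_pairwise.mp hchain
  have hcases := two_le_length_cases hs hu (length_le_of_pairwise_lt hsorted hmem)
    (by linarith [length_mul_le_two_mul_qform hsorted hmem])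
  match l, hsorted, hmem with
  | a :: b :: t, hsorted, hmem =>
    have hab : a < b := List.rel_of_pairwise_cons hsorted (by simp)
    obtain ⟨ha0, has⟩ := hmem a (by simp)
    obtain ⟨hb0, hbs⟩ := hmem b (by simp)
    rcases t with _ | ⟨c, _ | ⟨d, t⟩⟩
    · have hs6 : s ≤ 6 := by simp at hcases; omega
      interval_cases s <;> interval_cases a <;> interval_cases b <;> revert hq <;>
        norm_num [qform_cons, qform_nil]
    · have hs5 : s = 5 := by simp at hcases; omega
      have hbc : b < c := List.rel_of_pairwise_cons (List.pairwise_cons.mp hsorted).2 (by simp)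
      obtain ⟨hc0, hcs⟩ := hmem c (by simp)
      subst hs5
      interval_cases a <;> interval_cases b <;> interval_cases c <;> revert hq <;>
        norm_num [qform_cons, qform_nil]
    · simp at hcases; omega

/-- Corollary 8.9: the classification of `s`-minimal biliaison types `λ` with
`q_s(λ) ≤ (s+1)²` when `s ≥ 5`. -/
theorem stmt9 (s : ℕ) (hs : 5 ≤ s) (l : List ℕ) (hl : SMinimal s l)
    (hq : qform s l ≤ ((s : ℤ) + 1) ^ 2) :
    (l = [] ∧ qform s l = 0) ∨
    ((l = [1] ∨ l = [s - 1]) ∧ qform s l = ((s : ℤ) - 1) ^ 2) ∨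
    (5 ≤ s ∧ s ≤ 7 ∧ (l = [2] ∨ l = [s - 2]) ∧
      qform s l = 2 * ((s : ℤ) - 1) * ((s : ℤ) - 2)) ∨
    (s = 6 ∧ l = [3] ∧ qform s l = 45) ∨
    ((s = 5 ∨ s = 6) ∧ l = [1, s - 1]) ∨
    (s = 5 ∧ (l = [1, 3] ∨ l = [2, 4]) ∧ qform s l = 36) ∨
    (s = 5 ∧ (l = [1, 2] ∨ l = [3, 4]) ∧ qform s l = 34) := by
  rcases l with _ | ⟨a, _ | ⟨b, t⟩⟩
  · simp [qform_nil]
  · rcases singleton_classification hs (hl.2 a (by simp)) hq with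
      ⟨ha, hv⟩ | ⟨hs7, ha, hv⟩ | ⟨hs6, ha, hv⟩
    · exact Or.inr (Or.inl ⟨by simpa using ha, hv⟩)
    · exact Or.inr (Or.inr (Or.inl ⟨hs, hs7, by simpa using ha, hv⟩))
    · exact Or.inr (Or.inr (Or.inr (Or.inl ⟨hs6, by rw [ha], hv⟩)))
  · exact Or.inr (Or.inr (Or.inr (Or.inr (classification_of_two_le_length hs hl (by simp) hq))))
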